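/- Let p ∈ [1, ∞) and assume each r_i is lower semicontinuous with respect to weak convergence in L^p(Ω; ℝ). Let 𝐗 be a set-valued portfolio whose efficient part ∂⁺𝐗(ω) = {x ∈ 𝐗(ω) : there is no y ∈ 𝐗(ω) with y ≥ x and y ≠ x} is a.s. nonempty and Effros-measurable, satisfies 𝐗(ω) ⊆ ∂⁺𝐗(ω) + ℝ₋^d a.s., and is p-integrably bounded, i.e. sup{‖x‖ : x ∈ ∂⁺𝐗(ω)} ≤ ζ(ω) a.s. for some ζ ∈ L^p(Ω; ℝ). Then ρ_{s,0}(𝐗) is a closed subset of ℝ^d. -/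

import Mathlib

open MeasureTheory Set Filter
open scoped Pointwise ENNReal RealInnerProductSpace

noncomputable section

/-- `ℝ^d` with the Euclidean norm. -/
abbrev Vec (d : ℕ) := EuclideanSpace ℝ (Fin d)

/-- Effros measurability of a set-valued map: `{ω : X(ω) ∩ G ≠ ∅}` is measurable
for every open `G`. -/
def EffrosMeasurable {Ω : Type*} [MeasurableSpace Ω] {d : ℕ} (X : Ω → Set (Vec d)) : Prop :=
  ∀ G : Set (Vec d), IsOpen G → MeasurableSet {ω | (X ω ∩ G).Nonempty}

/-- A set-valued portfolio: an Effros-measurable map with nonempty closed convex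
lower-set values. -/
structure IsPortfolio {Ω : Type*} [MeasurableSpace Ω] {d : ℕ} (X : Ω → Set (Vec d)) : Prop where
  effros : EffrosMeasurable X
  nonempty : ∀ ω, (X ω).Nonempty
  isClosed : ∀ ω, IsClosed (X ω)
  convex : ∀ ω, Convex ℝ (X ω)
  lower : ∀ ω, ∀ x ∈ X ω, ∀ y : Vec d, (∀ i, y i ≤ x i) → y ∈ X ω

/-- A coherent risk measure on `L^p(Ω; ℝ)` with values in `ℝ ∪ {+∞} ⊆ EReal`:
monotone (antitone in the gain), cash invariant, subadditive and positively homogeneous. -/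
structure IsCoherent {Ω : Type*} [MeasurableSpace Ω] (μ : Measure Ω) (p : ℝ≥0∞)
    (r : (Ω → ℝ) → EReal) : Prop where
  ne_bot : ∀ ξ : Ω → ℝ, MemLp ξ p μ → r ξ ≠ ⊥
  mono : ∀ ξ η : Ω → ℝ, MemLp ξ p μ → MemLp η p μ → (∀ᵐ ω ∂μ, ξ ω ≤ η ω) → r η ≤ r ξ
  cash : ∀ ξ : Ω → ℝ, MemLp ξ p μ → ∀ c : ℝ, r (fun ω => ξ ω + c) = r ξ - (c : EReal)
  subadd : ∀ ξ η : Ω → ℝ, MemLp ξ p μ → MemLp η p μ →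
    r (fun ω => ξ ω + η ω) ≤ r ξ + r η
  homog : ∀ ξ : Ω → ℝ, MemLp ξ p μ → ∀ c : ℝ, 0 < c →
    r (fun ω => c * ξ ω) = (c : EReal) * r ξ

/-- The selection risk measure `ρ_{s,0}(𝐗)`: the set of deterministic `x ∈ ℝ^d`
for which `𝐗 + x` has a selection with all individually acceptable components. -/
def rho0 {Ω : Type*} [MeasurableSpace Ω] (μ : Measure Ω) (p : ℝ≥0∞) {d : ℕ}
    (r : Fin d → (Ω → ℝ) → EReal) (X : Ω → Set (Vec d)) : Set (Vec d) :=
  {x | ∃ ξ : Ω → Vec d, MemLp ξ p μ ∧ (∀ᵐ ω ∂μ, ξ ω ∈ X ω) ∧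
        ∀ i, r i (fun ω => ξ ω i + x i) ≤ 0}

/-- Lower semicontinuity of a risk measure with respect to weak convergence in
`L^p(Ω; ℝ)` (test functions in `L^q`). -/
def WeakLSC {Ω : Type*} [MeasurableSpace Ω] (μ : Measure Ω) (p q : ℝ≥0∞)
    (r : (Ω → ℝ) → EReal) : Prop :=
  ∀ (ξ : ℕ → Ω → ℝ) (ξ₀ : Ω → ℝ), (∀ n, MemLp (ξ n) p μ) → MemLp ξ₀ p μ →
    (∀ ζ : Ω → ℝ, MemLp ζ q μ →
      Tendsto (fun n => ∫ ω, ξ n ω * ζ ω ∂μ) atTop (nhds (∫ ω, ξ₀ ω * ζ ω ∂μ))) →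
    r ξ₀ ≤ liminf (fun n => r (ξ n)) atTop

/-- The efficient part `∂⁺𝐗(ω)` of a set-valued portfolio: points of `𝐗(ω)` that are
not dominated coordinatewise by any other point of `𝐗(ω)`. -/
def effPart {Ω : Type*} {d : ℕ} (X : Ω → Set (Vec d)) (ω : Ω) : Set (Vec d) :=
  {x ∈ X ω | ∀ y ∈ X ω, (∀ i, x i ≤ y i) → y = x}

open scoped Topology

/-!
Let `x n → x₀` with `x n ∈ ρ_{s,0}(𝐗)` witnessed by selections `ξ n`. Raising every coordinate
of `ξ n` to at least `-ζ` gives a selection `η n ≥ ξ n`: it stays below the efficient point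
dominating `ξ n`, whose coordinates are at least `-ζ`. Hence `η n` is still acceptable for `x n`,
and `‖η n‖ ≤ ρ := √d |ζ| + 1 ∈ L^p`. After division by `√ρ` the sequence is bounded in `L²`, so a
subsequence converges weakly there (sequential Banach–Alaoglu); the limit `η₀` is again a
selection of the closed convex `𝐗` (Mazur), and truncating the test functions turns weak `L²`
convergence into convergence of `∫ (η n)ᵢ g` for every `g ∈ L^q`. Weak lower semicontinuity,
monotonicity and cash invariance of `rᵢ` then give `rᵢ((η₀)ᵢ + (x₀)ᵢ) ≤ 0`.
-/

section Hilbert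

variable {H : Type*} [NormedAddCommGroup H] [InnerProductSpace ℝ H] [CompleteSpace H]

theorem exists_subseq_tendsto_inner {v : ℕ → H} {B : ℝ} (hB : ∀ n, ‖v n‖ ≤ B) :
    ∃ φ : ℕ → ℕ, StrictMono φ ∧ ∃ v₀ : H,
      ∀ w : H, Tendsto (fun n => ⟪v (φ n), w⟫) atTop (𝓝 ⟪v₀, w⟫) := by
  -- sequential Banach–Alaoglu on the separable closed span `K` of the sequence; test vectors
  -- outside `K` are reduced to `K` by orthogonal projection
  set K := (Submodule.span ℝ (range v)).topologicalClosure
  have : TopologicalSpace.SeparableSpace K :=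
    ((countable_range v).isSeparable.span.closure.mono
      (Submodule.topologicalClosure_coe _).le).separableSpace
  have : CompleteSpace K := (Submodule.isClosed_topologicalClosure _).completeSpace_coe
  have hvK : ∀ n, v n ∈ K := fun n =>
    Submodule.le_topologicalClosure _ (Submodule.subset_span ⟨n, rfl⟩)
  let f : ℕ → StrongDual ℝ K := fun n => InnerProductSpace.toDual ℝ K ⟨v n, hvK n⟩
  have hf : ∀ n, f n ∈ Metric.closedBall 0 B := fun n =>
    mem_closedBall_zero_iff.2 (((InnerProductSpace.toDual ℝ K).norm_map _).trans_le (hB n))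
  obtain ⟨f₀, -, φ, hφ, hlim⟩ :=
    WeakDual.isSeqCompact_closedBall ℝ K 0 B (x := fun n => StrongDual.toWeakDual (f n)) hf
  refine ⟨φ, hφ, (InnerProductSpace.toDual ℝ K).symm (WeakDual.toStrongDual f₀), fun w => ?_⟩
  rw [← K.inner_orthogonalProjectionOnto_eq_of_mem_left, InnerProductSpace.toDual_symm_apply]
  exact (((WeakDual.eval_continuous _).tendsto f₀).comp hlim).congr fun n => by simp [f]

theorem Convex.mem_of_tendsto_inner {S : Set H} (hSc : Convex ℝ S) (hS : IsClosed S)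
    {u : ℕ → H} {u₀ : H} (hu : ∀ n, u n ∈ S)
    (h : ∀ w : H, Tendsto (fun n => ⟪u n, w⟫) atTop (𝓝 ⟪u₀, w⟫)) : u₀ ∈ S := by
  by_contra hu₀
  obtain ⟨f, s, hfS, hsf⟩ := geometric_hahn_banach_closed_point hSc hS hu₀
  have hf : ∀ x, f x = ⟪x, (InnerProductSpace.toDual ℝ H).symm f⟫ := fun x => by
    rw [real_inner_comm, InnerProductSpace.toDual_symm_apply]
  have hlim : f u₀ ≤ s := by
    simp only [hf] at hfS ⊢
    exact le_of_tendsto (h _) (Eventually.of_forall fun n => (hfS _ (hu n)).le)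
  exact hsf.not_ge hlim

end Hilbert

section L2

variable {Ω E : Type*} [MeasurableSpace Ω] {μ : Measure Ω} [NormedAddCommGroup E]
  [InnerProductSpace ℝ E]

theorem integrable_inner_of_norm_le {ρ : Ω → ℝ} {f g : Ω → E} (hf : AEStronglyMeasurable f μ)
    (hg : AEStronglyMeasurable g μ) (hfρ : ∀ᵐ ω ∂μ, ‖f ω‖ ≤ ρ ω)
    (hρg : Integrable (fun ω => ρ ω * ‖g ω‖) μ) : Integrable (fun ω => ⟪f ω, g ω⟫) μ :=
  hρg.mono' (hf.inner hg) <| hfρ.mono fun _ hω =>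
    (norm_inner_le_norm _ _).trans (mul_le_mul_of_nonneg_right hω (norm_nonneg _))

theorem dist_integral_inner_sub_le {ρ : Ω → ℝ} {f g h : Ω → E} (hf : AEStronglyMeasurable f μ)
    (hg : AEStronglyMeasurable g μ) (hh : AEStronglyMeasurable h μ)
    (hfρ : ∀ᵐ ω ∂μ, ‖f ω‖ ≤ ρ ω) (hρg : Integrable (fun ω => ρ ω * ‖g ω‖) μ)
    (hρh : Integrable (fun ω => ρ ω * ‖h ω‖) μ) :
    dist (∫ ω, ⟪f ω, g ω⟫ ∂μ) (∫ ω, ⟪f ω, g ω - h ω⟫ ∂μ) ≤ ∫ ω, ρ ω * ‖h ω‖ ∂μ := by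
  simp_rw [inner_sub_right]
  rw [integral_sub (integrable_inner_of_norm_le hf hg hfρ hρg)
    (integrable_inner_of_norm_le hf hh hfρ hρh), dist_eq_norm, sub_sub_cancel]
  exact norm_integral_le_of_norm_le hρh <| hfρ.mono fun ω hω =>
    (norm_inner_le_norm _ _).trans (mul_le_mul_of_nonneg_right hω (norm_nonneg _))

theorem tendsto_integral_inner_of_forall_truncation {ρ : Ω → ℝ} (hρ : AEStronglyMeasurable ρ μ)
    (hρ0 : ∀ ω, 0 ≤ ρ ω) {f : ℕ → Ω → E} {f₀ g : Ω → E} (hf : ∀ n, AEStronglyMeasurable (f n) μ)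
    (hfρ : ∀ n, ∀ᵐ ω ∂μ, ‖f n ω‖ ≤ ρ ω) (hf₀ : AEStronglyMeasurable f₀ μ)
    (hf₀ρ : ∀ᵐ ω ∂μ, ‖f₀ ω‖ ≤ ρ ω) (hg : AEStronglyMeasurable g μ)
    (hρg : Integrable (fun ω => ρ ω * ‖g ω‖) μ)
    (h : ∀ M : ℕ, Tendsto (fun n => ∫ ω, ⟪f n ω, {ω | ‖g ω‖ ≤ M}.indicator g ω⟫ ∂μ) atTop
      (𝓝 (∫ ω, ⟪f₀ ω, {ω | ‖g ω‖ ≤ M}.indicator g ω⟫ ∂μ))) :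
    Tendsto (fun n => ∫ ω, ⟪f n ω, g ω⟫ ∂μ) atTop (𝓝 (∫ ω, ⟪f₀ ω, g ω⟫ ∂μ)) := by
  let t : ℕ → Ω → E := fun M => {ω | (M : ℝ) < ‖g ω‖}.indicator g
  have ht : ∀ M, AEStronglyMeasurable (t M) μ := fun M =>
    hg.indicator₀ (nullMeasurableSet_lt aemeasurable_const hg.norm.aemeasurable)
  have htg : ∀ M ω, ‖ρ ω * ‖t M ω‖‖ ≤ ρ ω * ‖g ω‖ := fun M ω => by
    rw [Real.norm_of_nonneg (mul_nonneg (hρ0 ω) (norm_nonneg _))]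
    exact mul_le_mul_of_nonneg_left (norm_indicator_le_norm_self _ _) (hρ0 ω)
  have hρt : ∀ M, Integrable (fun ω => ρ ω * ‖t M ω‖) μ := fun M =>
    hρg.mono' (hρ.mul (ht M).norm) (Eventually.of_forall (htg M))
  have hsplit : ∀ M : ℕ, {ω | ‖g ω‖ ≤ M}.indicator g = fun ω => g ω - t M ω := fun M => by
    ext ω
    by_cases hω : (M : ℝ) < ‖g ω‖ <;> simp [t, hω, le_of_not_gt]
  have htail : Tendsto (fun M : ℕ => ∫ ω, ρ ω * ‖t M ω‖ ∂μ) atTop (𝓝 0) := by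
    have hzero : ∀ ω, ∀ᶠ M : ℕ in atTop, 0 = ρ ω * ‖t M ω‖ := fun ω => by
      filter_upwards [eventually_ge_atTop ⌈‖g ω‖⌉₊] with M hM
      simp [t, (Nat.ceil_le.1 hM).not_gt]
    simpa using tendsto_integral_of_dominated_convergence _ (fun M => (hρt M).1) hρg
      (fun M => Eventually.of_forall (htg M))
      (Eventually.of_forall fun ω => tendsto_const_nhds.congr' (hzero ω))
  simp only [hsplit] at h
  -- the truncated pairings converge uniformly in `n`, with error at most `∫ ρ ‖t M‖`
  refine TendstoUniformly.tendsto_of_eventually_tendsto (p := atTop)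
    (F := fun M n => ∫ ω, ⟪f n ω, g ω - t M ω⟫ ∂μ) ?_ (Eventually.of_forall h) ?_
  · exact Metric.tendstoUniformly_iff.2 fun ε hε => (htail.eventually (gt_mem_nhds hε)).mono
      fun M hM n => (dist_integral_inner_sub_le (hf n) hg (ht M) (hfρ n) hρg (hρt M)).trans_lt hM
  · refine tendsto_iff_dist_tendsto_zero.2 (squeeze_zero (fun _ => dist_nonneg) (fun M => ?_) htail)
    rw [dist_comm]
    exact dist_integral_inner_sub_le hf₀ hg (ht M) hf₀ρ hρg (hρt M)

variable [CompleteSpace E]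

theorem MeasureTheory.Lp.ae_mem_of_tendsto_inner {K : Ω → Set E} (hKc : ∀ ω, Convex ℝ (K ω))
    (hK : ∀ ω, IsClosed (K ω)) {Θ : ℕ → Lp E 2 μ} {Θ₀ : Lp E 2 μ}
    (hΘ : ∀ n, ∀ᵐ ω ∂μ, Θ n ω ∈ K ω)
    (h : ∀ T : Lp E 2 μ, Tendsto (fun n => ⟪Θ n, T⟫) atTop (𝓝 ⟪Θ₀, T⟫)) :
    ∀ᵐ ω ∂μ, Θ₀ ω ∈ K ω := by
  let S : Set (Lp E 2 μ) := {f | ∀ᵐ ω ∂μ, f ω ∈ K ω}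
  have hSc : Convex ℝ S := fun f hf g hg a b ha hb hab => by
    filter_upwards [hf, hg, Lp.coeFn_add (a • f) (b • g), Lp.coeFn_smul a f,
      Lp.coeFn_smul b g] with ω hfω hgω hadd hsf hsg
    rw [hadd, Pi.add_apply, hsf, hsg]
    exact hKc ω hfω hgω ha hb hab
  have hS : IsClosed S := isClosed_of_closure_subset fun f hf => by
    obtain ⟨g, hgS, hg⟩ := mem_closure_iff_seq_limit.1 hf
    obtain ⟨ns, -, hae⟩ := (tendstoInMeasure_of_tendsto_Lp hg).exists_seq_tendsto_ae
    filter_upwards [ae_all_iff.2 fun k => hgS (ns k), hae] with ω hω hlim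
    exact (hK ω).mem_of_tendsto hlim (Eventually.of_forall hω)
  exact hSc.mem_of_tendsto_inner hS hΘ h

theorem exists_subseq_tendsto_integral_inner_of_integrable_sq {C : Ω → Set E}
    (hCc : ∀ ω, Convex ℝ (C ω)) (hC : ∀ ω, IsClosed (C ω)) {ρ : Ω → ℝ} (hρ : Integrable ρ μ)
    (hρpos : ∀ ω, 0 < ρ ω) {η : ℕ → Ω → E} (hη : ∀ n, AEStronglyMeasurable (η n) μ)
    (hηC : ∀ n, ∀ᵐ ω ∂μ, η n ω ∈ C ω ∧ ‖η n ω‖ ≤ ρ ω) :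
    ∃ φ : ℕ → ℕ, StrictMono φ ∧ ∃ η₀ : Ω → E, AEStronglyMeasurable η₀ μ ∧
      (∀ᵐ ω ∂μ, η₀ ω ∈ C ω ∧ ‖η₀ ω‖ ≤ ρ ω) ∧
      ∀ g : Ω → E, AEStronglyMeasurable g μ → Integrable (fun ω => ρ ω * ‖g ω‖ ^ 2) μ →
        Tendsto (fun n => ∫ ω, ⟪η (φ n) ω, g ω⟫ ∂μ) atTop (𝓝 (∫ ω, ⟪η₀ ω, g ω⟫ ∂μ)) := by
  -- `(√ρ)⁻¹ • η n` is bounded in `L²`, and `⟪(√ρ)⁻¹ • η n, √ρ • g⟫ = ⟪η n, g⟫`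
  set s : Ω → ℝ := fun ω => √(ρ ω)
  have hs : AEStronglyMeasurable s μ := Real.continuous_sqrt.comp_aestronglyMeasurable hρ.1
  have hspos : ∀ ω, 0 < s ω := fun ω => Real.sqrt_pos.2 (hρpos ω)
  have hs2 : MemLp s 2 μ := (memLp_two_iff_integrable_sq hs).2 <|
    hρ.congr (Eventually.of_forall fun ω => (Real.sq_sqrt (hρpos ω).le).symm)
  have hΘs : ∀ n, ∀ᵐ ω ∂μ, ‖(s ω)⁻¹ • η n ω‖ ≤ ‖s ω‖ := fun n => (hηC n).mono fun ω hω => by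
    rw [norm_smul, norm_inv, Real.norm_of_nonneg (hspos ω).le, inv_mul_le_iff₀ (hspos ω),
      Real.mul_self_sqrt (hρpos ω).le]
    exact hω.2
  have hΘ2 : ∀ n, MemLp (fun ω => (s ω)⁻¹ • η n ω) 2 μ := fun n =>
    hs2.of_le (hs.aemeasurable.inv.aestronglyMeasurable.smul (hη n)) (hΘs n)
  let Θ : ℕ → Lp E 2 μ := fun n => (hΘ2 n).toLp _
  have hΘB : ∀ n, ‖Θ n‖ ≤ (eLpNorm s 2 μ).toReal := fun n => by
    rw [Lp.norm_toLp]
    exact ENNReal.toReal_mono hs2.2.ne (eLpNorm_mono_ae (hΘs n))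
  obtain ⟨φ, hφ, Θ₀, hweak⟩ := exists_subseq_tendsto_inner hΘB
  have hK : ∀ᵐ ω ∂μ, s ω • Θ₀ ω ∈ C ω ∩ Metric.closedBall 0 (ρ ω) := by
    refine Lp.ae_mem_of_tendsto_inner (K := fun ω => (s ω • ·) ⁻¹' (C ω ∩ _))
      (fun ω => ((hCc ω).inter (convex_closedBall _ _)).smul_preimage _)
      (fun ω => ((hC ω).inter Metric.isClosed_closedBall).preimage (continuous_const_smul _))
      (fun n => ?_) hweak
    filter_upwards [(hΘ2 (φ n)).coeFn_toLp, hηC (φ n)] with ω hΘω hηω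
    rw [mem_preimage, show (Θ (φ n) : Ω → E) ω = _ from hΘω, smul_inv_smul₀ (hspos ω).ne']
    exact ⟨hηω.1, mem_closedBall_zero_iff.2 hηω.2⟩
  refine ⟨φ, hφ, fun ω => s ω • Θ₀ ω, hs.smul (Lp.aestronglyMeasurable Θ₀),
    hK.mono fun ω hω => ⟨hω.1, mem_closedBall_zero_iff.1 hω.2⟩, fun g hg hρg => ?_⟩
  have hT : MemLp (fun ω => s ω • g ω) 2 μ := (memLp_two_iff_integrable_sq_norm (hs.smul hg)).2 <|
    hρg.congr <| Eventually.of_forall fun ω => by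
      show ρ ω * ‖g ω‖ ^ 2 = ‖s ω • g ω‖ ^ 2
      rw [norm_smul, mul_pow, Real.norm_of_nonneg (hspos ω).le, Real.sq_sqrt (hρpos ω).le]
  have hpair : ∀ (F : Lp E 2 μ) (f : Ω → E), (F =ᵐ[μ] fun ω => (s ω)⁻¹ • f ω) →
      ⟪F, hT.toLp _⟫ = ∫ ω, ⟪f ω, g ω⟫ ∂μ := fun F f hF => by
    rw [L2.inner_def]
    refine integral_congr_ae ?_
    filter_upwards [hF, hT.coeFn_toLp] with ω hFω hTω
    rw [hFω, hTω, real_inner_smul_left, real_inner_smul_right,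
      inv_mul_cancel_left₀ (hspos ω).ne']
  have hΘ₀ : (Θ₀ : Ω → E) =ᵐ[μ] fun ω => (s ω)⁻¹ • s ω • Θ₀ ω :=
    Eventually.of_forall fun ω => (inv_smul_smul₀ (hspos ω).ne' _).symm
  have := hweak (hT.toLp _)
  rwa [hpair _ _ hΘ₀, funext fun n => hpair _ _ (hΘ2 (φ n)).coeFn_toLp] at this

theorem exists_subseq_tendsto_integral_inner {C : Ω → Set E} (hCc : ∀ ω, Convex ℝ (C ω))
    (hC : ∀ ω, IsClosed (C ω)) {ρ : Ω → ℝ} (hρ : Integrable ρ μ) (hρpos : ∀ ω, 0 < ρ ω)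
    {η : ℕ → Ω → E} (hη : ∀ n, AEStronglyMeasurable (η n) μ)
    (hηC : ∀ n, ∀ᵐ ω ∂μ, η n ω ∈ C ω ∧ ‖η n ω‖ ≤ ρ ω) :
    ∃ φ : ℕ → ℕ, StrictMono φ ∧ ∃ η₀ : Ω → E, AEStronglyMeasurable η₀ μ ∧
      (∀ᵐ ω ∂μ, η₀ ω ∈ C ω ∧ ‖η₀ ω‖ ≤ ρ ω) ∧
      ∀ g : Ω → E, AEStronglyMeasurable g μ → Integrable (fun ω => ρ ω * ‖g ω‖) μ →
        Tendsto (fun n => ∫ ω, ⟪η (φ n) ω, g ω⟫ ∂μ) atTop (𝓝 (∫ ω, ⟪η₀ ω, g ω⟫ ∂μ)) := by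
  obtain ⟨φ, hφ, η₀, hη₀, hη₀C, hlim⟩ :=
    exists_subseq_tendsto_integral_inner_of_integrable_sq hCc hC hρ hρpos hη hηC
  refine ⟨φ, hφ, η₀, hη₀, hη₀C, fun g hg hρg => ?_⟩
  refine tendsto_integral_inner_of_forall_truncation hρ.1 (fun ω => (hρpos ω).le)
    (fun n => hη (φ n)) (fun n => (hηC (φ n)).mono fun _ hω => hω.2) hη₀
    (hη₀C.mono fun _ hω => hω.2) hg hρg fun M => ?_
  have hgM : AEStronglyMeasurable ({ω | ‖g ω‖ ≤ M}.indicator g) μ :=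
    hg.indicator₀ (nullMeasurableSet_le hg.norm.aemeasurable aemeasurable_const)
  refine hlim _ hgM <| (hρg.const_mul M).mono' (hρ.1.mul (hgM.norm.pow 2)) <|
    Eventually.of_forall fun ω => ?_
  rw [Real.norm_of_nonneg (mul_nonneg (hρpos ω).le (sq_nonneg _)), ← mul_assoc, mul_comm (M : ℝ),
    mul_assoc]
  refine mul_le_mul_of_nonneg_left ?_ (hρpos ω).le
  by_cases hω : ‖g ω‖ ≤ M
  · simpa [hω, sq] using mul_le_mul_of_nonneg_right hω (norm_nonneg _)
  · simp [hω, mul_nonneg M.cast_nonneg (norm_nonneg (g ω))]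

end L2

section Euclidean

variable {ι : Type*}

theorem EuclideanSpace.norm_le_sqrt_card_mul [Fintype ι] {x : EuclideanSpace ℝ ι} {c : ℝ}
    (hc : 0 ≤ c) (h : ∀ i, |x i| ≤ c) : ‖x‖ ≤ √(Fintype.card ι) * c := by
  rw [EuclideanSpace.norm_eq, ← Real.sqrt_sq hc, ← Real.sqrt_mul (Nat.cast_nonneg _)]
  refine Real.sqrt_le_sqrt ?_
  calc ∑ i, ‖x i‖ ^ 2 ≤ ∑ _i : ι, c ^ 2 :=
        Finset.sum_le_sum fun i _ => by simpa using sq_le_sq' (abs_le.1 (h i)).1 (abs_le.1 (h i)).2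
    _ = Fintype.card ι * c ^ 2 := by simp

def EuclideanSpace.clipBelow (c : ℝ) (x : EuclideanSpace ℝ ι) : EuclideanSpace ℝ ι :=
  WithLp.toLp 2 fun i => max (x i) (-c)

theorem EuclideanSpace.continuous_clipBelow :
    Continuous fun p : ℝ × EuclideanSpace ℝ ι => EuclideanSpace.clipBelow p.1 p.2 := by
  unfold EuclideanSpace.clipBelow
  fun_prop

theorem EuclideanSpace.le_clipBelow (c : ℝ) (x : EuclideanSpace ℝ ι) (i : ι) :
    x i ≤ EuclideanSpace.clipBelow c x i :=
  le_max_left _ _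

theorem EuclideanSpace.clipBelow_mem_of_le [Fintype ι] {S : Set (EuclideanSpace ℝ ι)}
    (hS : ∀ y ∈ S, ∀ z : EuclideanSpace ℝ ι, (∀ i, z i ≤ y i) → z ∈ S)
    {x y : EuclideanSpace ℝ ι} (hxy : ∀ i, x i ≤ y i) (hy : y ∈ S) {c : ℝ} (hyc : ‖y‖ ≤ c) :
    EuclideanSpace.clipBelow c x ∈ S ∧
      ‖EuclideanSpace.clipBelow c x‖ ≤ √(Fintype.card ι) * c := by
  have hyi : ∀ i, |y i| ≤ c := fun i => (PiLp.norm_apply_le y i).trans hyc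
  have hle : ∀ i, EuclideanSpace.clipBelow c x i ≤ y i := fun i =>
    max_le (hxy i) (neg_le_of_abs_le (hyi i))
  exact ⟨hS y hy _ hle, EuclideanSpace.norm_le_sqrt_card_mul ((norm_nonneg y).trans hyc) fun i =>
    abs_le.2 ⟨le_max_right _ _, (hle i).trans ((le_abs_self _).trans (hyi i))⟩⟩

end Euclidean

theorem IsPortfolio.ae_clipBelow_mem {Ω : Type*} [MeasurableSpace Ω] {μ : Measure Ω} {d : ℕ}
    {X : Ω → Set (Vec d)} (hX : IsPortfolio X) {ζ : Ω → ℝ}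
    (hdom : ∀ᵐ ω ∂μ, ∀ x ∈ X ω, ∃ y ∈ effPart X ω, ∀ i, x i ≤ y i)
    (hbd : ∀ᵐ ω ∂μ, ∀ x ∈ effPart X ω, ‖x‖ ≤ ζ ω) {ξ : Ω → Vec d} (hξ : ∀ᵐ ω ∂μ, ξ ω ∈ X ω) :
    ∀ᵐ ω ∂μ, EuclideanSpace.clipBelow (ζ ω) (ξ ω) ∈ X ω ∧
      ‖EuclideanSpace.clipBelow (ζ ω) (ξ ω)‖ ≤ √d * ζ ω := by
  filter_upwards [hξ, hdom, hbd] with ω hξω hdomω hbdω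
  obtain ⟨y, hy, hξy⟩ := hdomω _ hξω
  simpa only [Fintype.card_fin] using EuclideanSpace.clipBelow_mem_of_le (hX.lower ω) hξy hy.1 (hbdω y hy)

section RiskMeasure

variable {Ω : Type*} [MeasurableSpace Ω] {μ : Measure Ω} {p q : ℝ≥0∞} {r : (Ω → ℝ) → EReal}

theorem tendsto_integral_add_const_mul {f : ℕ → Ω → ℝ} {f₀ g : Ω → ℝ}
    (hf : ∀ n, Integrable (fun ω => f n ω * g ω) μ) (hf₀ : Integrable (fun ω => f₀ ω * g ω) μ)
    (hg : Integrable g μ)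
    (h : Tendsto (fun n => ∫ ω, f n ω * g ω ∂μ) atTop (𝓝 (∫ ω, f₀ ω * g ω ∂μ))) (c : ℝ) :
    Tendsto (fun n => ∫ ω, (f n ω + c) * g ω ∂μ) atTop (𝓝 (∫ ω, (f₀ ω + c) * g ω ∂μ)) := by
  simp_rw [add_mul, integral_add (hf _) (hg.const_mul c), integral_add hf₀ (hg.const_mul c)]
  exact h.add_const _

theorem IsCoherent.apply_add_le (hr : IsCoherent μ p r) [IsFiniteMeasure μ] {ξ η : Ω → ℝ}
    (hξ : MemLp ξ p μ) (hη : MemLp η p μ) (hξη : ∀ᵐ ω ∂μ, ξ ω ≤ η ω) {a : ℝ}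
    (ha : r (fun ω => ξ ω + a) ≤ 0) (b : ℝ) : r (fun ω => η ω + b) ≤ ((a - b : ℝ) : EReal) := by
  have hηa : r (fun ω => η ω + a) ≤ 0 :=
    (hr.mono _ _ (hξ.add (memLp_const a)) (hη.add (memLp_const a))
      (hξη.mono fun _ hω => add_le_add_left hω a)).trans ha
  calc r (fun ω => η ω + b) = r (fun ω => η ω + a) - ((b - a : ℝ) : EReal) := by
        rw [← hr.cash (fun ω => η ω + a) (hη.add (memLp_const a))]
        simp only [add_add_sub_cancel]
    _ ≤ 0 - ((b - a : ℝ) : EReal) := EReal.sub_le_sub hηa le_rfl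
    _ = ((a - b : ℝ) : EReal) := by rw [zero_sub, ← EReal.coe_neg, neg_sub]

theorem WeakLSC.nonpos_of_le_of_tendsto (hr : WeakLSC μ p q r) {ξ : ℕ → Ω → ℝ} {ξ₀ : Ω → ℝ}
    (hξ : ∀ n, MemLp (ξ n) p μ) (hξ₀ : MemLp ξ₀ p μ)
    (hweak : ∀ g : Ω → ℝ, MemLp g q μ →
      Tendsto (fun n => ∫ ω, ξ n ω * g ω ∂μ) atTop (𝓝 (∫ ω, ξ₀ ω * g ω ∂μ)))
    {c : ℕ → ℝ} (hc : Tendsto c atTop (𝓝 0)) (hξc : ∀ n, r (ξ n) ≤ c n) : r ξ₀ ≤ 0 :=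
  calc r ξ₀ ≤ liminf (fun n => r (ξ n)) atTop := hr ξ ξ₀ hξ hξ₀ hweak
    _ ≤ liminf (fun n => (c n : EReal)) atTop := liminf_le_liminf (Eventually.of_forall hξc)
    _ = 0 := (EReal.tendsto_coe.2 hc).liminf_eq

theorem WeakLSC.apply_add_nonpos_of_tendsto [IsFiniteMeasure μ] [ENNReal.HolderConjugate p q]
    (hlsc : WeakLSC μ p q r) (hr : IsCoherent μ p r) {ξ η : ℕ → Ω → ℝ} {η₀ : Ω → ℝ}
    {a : ℕ → ℝ} {a₀ : ℝ} (hξ : ∀ n, MemLp (ξ n) p μ) (hη : ∀ n, MemLp (η n) p μ)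
    (hη₀ : MemLp η₀ p μ) (hξη : ∀ n, ∀ᵐ ω ∂μ, ξ n ω ≤ η n ω)
    (hξa : ∀ n, r (fun ω => ξ n ω + a n) ≤ 0) (ha : Tendsto a atTop (𝓝 a₀))
    (hweak : ∀ g : Ω → ℝ, MemLp g q μ →
      Tendsto (fun n => ∫ ω, η n ω * g ω ∂μ) atTop (𝓝 (∫ ω, η₀ ω * g ω ∂μ))) :
    r (fun ω => η₀ ω + a₀) ≤ 0 :=
  hlsc.nonpos_of_le_of_tendsto (fun n => (hη n).add (memLp_const a₀)) (hη₀.add (memLp_const a₀))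
    (fun g hg => tendsto_integral_add_const_mul (fun n => (hη n).integrable_mul hg)
      (hη₀.integrable_mul hg) (hg.integrable (ENNReal.HolderConjugate.one_le q p)) (hweak g hg) a₀)
    (tendsto_sub_nhds_zero_iff.2 ha) fun n => hr.apply_add_le (hξ n) (hη n) (hξη n) (hξa n) a₀

end RiskMeasure

theorem statement4 {Ω : Type*} [MeasurableSpace Ω] (μ : Measure Ω) [IsProbabilityMeasure μ]
    {d : ℕ} (p q : ℝ≥0∞) (hpq : 1/p + 1/q = 1)
    (r : Fin d → (Ω → ℝ) → EReal) (hr : ∀ i, IsCoherent μ p (r i))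
    (hlsc : ∀ i, WeakLSC μ p q (r i))
    (X : Ω → Set (Vec d)) (hX : IsPortfolio X)
    (hdom : ∀ᵐ ω ∂μ, ∀ x ∈ X ω, ∃ y ∈ effPart X ω, ∀ i, x i ≤ y i)
    (ζ : Ω → ℝ) (hζ : MemLp ζ p μ)
    (hbd : ∀ᵐ ω ∂μ, ∀ x ∈ effPart X ω, ‖x‖ ≤ ζ ω) :
    IsClosed (rho0 μ p r X) := by
  have : ENNReal.HolderConjugate p q := ⟨by simpa [one_div] using hpq⟩
  set ρ : Ω → ℝ := fun ω => √d * |ζ ω| + 1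
  have hρ : MemLp ρ p μ := (hζ.abs.const_mul _).add (memLp_const 1)
  have hρg : ∀ g : Ω → ℝ, MemLp g q μ → Integrable (fun ω => ρ ω * ‖g ω‖) μ :=
    fun g hg => hρ.integrable_mul hg.norm
  have hcoord : ∀ {ξ : Ω → Vec d}, MemLp ξ p μ → ∀ i, MemLp (fun ω => ξ ω i) p μ :=
    fun hξ i => (EuclideanSpace.proj (𝕜 := ℝ) (ι := Fin d) i).comp_memLp' hξ
  refine IsSeqClosed.isClosed fun x x₀ hx hx₀ => ?_
  choose ξ hξ hξX hξr using hx
  set η : ℕ → Ω → Vec d := fun n ω => EuclideanSpace.clipBelow (ζ ω) (ξ n ω)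
  have hηm : ∀ n, AEStronglyMeasurable (η n) μ := fun n =>
    EuclideanSpace.continuous_clipBelow.comp_aestronglyMeasurable₂ hζ.1 (hξ n).1
  have hηX : ∀ n, ∀ᵐ ω ∂μ, η n ω ∈ X ω ∧ ‖η n ω‖ ≤ ρ ω := fun n =>
    (hX.ae_clipBelow_mem hdom hbd (hξX n)).mono fun ω hω => ⟨hω.1, hω.2.trans <|
      le_add_of_le_of_nonneg (by gcongr; exact le_abs_self _) zero_le_one⟩
  have hη : ∀ n, MemLp (η n) p μ := fun n => hρ.of_le (hηm n) <| (hηX n).mono fun ω hω =>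
    hω.2.trans (le_abs_self _)
  obtain ⟨φ, hφ, η₀, hη₀m, hη₀X, hη₀⟩ := exists_subseq_tendsto_integral_inner hX.convex
    hX.isClosed (hρ.integrable (ENNReal.HolderConjugate.one_le p q)) (fun ω => by positivity) hηm hηX
  have hη₀p : MemLp η₀ p μ := hρ.of_le hη₀m (hη₀X.mono fun ω hω => hω.2.trans (le_abs_self _))
  refine ⟨η₀, hη₀p, hη₀X.mono fun _ hω => hω.1, fun i => ?_⟩
  have hweak : ∀ g : Ω → ℝ, MemLp g q μ → Tendsto (fun n => ∫ ω, η (φ n) ω i * g ω ∂μ) atTop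
      (𝓝 (∫ ω, η₀ ω i * g ω ∂μ)) := fun g hg => by
    simpa [real_inner_smul_right, EuclideanSpace.inner_single_right, mul_comm] using
      hη₀ (fun ω => g ω • EuclideanSpace.single i 1) (hg.1.smul aestronglyMeasurable_const)
        (by simpa [norm_smul] using hρg g hg)
  exact (hlsc i).apply_add_nonpos_of_tendsto (hr i) (fun n => hcoord (hξ (φ n)) i)
    (fun n => hcoord (hη (φ n)) i) (hcoord hη₀p i)
    (fun n => Eventually.of_forall fun ω => EuclideanSpace.le_clipBelow _ _ i) (fun n => hξr (φ n) i)
    (((PiLp.continuous_apply 2 _ i).tendsto x₀).comp (hx₀.comp hφ.tendsto_atTop)) hweak
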